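/- arXiv:1602.08585 — 6 statements merged into one kernel-verified Lean document; each statement's English description precedes it below -/
import Mathlib

section
/- Let A ∈ S^{d×n}. The action of F_2^d on the torus T^n = (ℝ/ℤ)^n determined by A is free if and only if for every nonzero x ∈ F_2^d there exists a column index j (1 ≤ j ≤ n) such that s_j(x) = 1, i.e., the sum in the group S of the entries A_{ij} over all rows i with x_i = 1 equals 1. -/
/-- The group `S = {0,1,2,3}`, realized as `F₂ × F₂` via `s ↦ (α s, β s)`:
`0 ↔ (0,0)`, `1 ↔ (1,1)`, `2 ↔ (1,0)`, `3 ↔ (0,1)`. -/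
abbrev S4 : Type := ZMod 2 × ZMod 2

def Sα (s : S4) : ZMod 2 := s.1
def Sβ (s : S4) : ZMod 2 := s.2

def s0 : S4 := (0, 0)
def s1 : S4 := (1, 1)
def s2 : S4 := (1, 0)
def s3 : S4 := (0, 1)

/-- The action of `s ∈ S` on the circle `ℝ/ℤ`: `s·[t] = [(-1)^(α s + β s) t + (β s)/2]`. -/
noncomputable def circleAct (s : S4) (t : UnitAddCircle) : UnitAddCircle :=
  ((-1 : ℤ) ^ (Sα s + Sβ s).val) • t + (↑((((Sβ s).val : ℝ)) / 2) : UnitAddCircle)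

/-- `s_j(x)`: the sum in the group `S` of the entries `A i j` over all rows `i` with `x i = 1`. -/
def colSum {d : ℕ} {ι : Type*} (A : Matrix (Fin d) ι S4) (x : Fin d → ZMod 2) (j : ι) : S4 :=
  ∑ i, (x i).val • A i j

/-- The action of `x ∈ F₂^d` on the torus `T^n` determined by the matrix `A`. -/
noncomputable def torusAct {d n : ℕ} (A : Matrix (Fin d) (Fin n) S4)
    (x : Fin d → ZMod 2) (p : Fin n → UnitAddCircle) : Fin n → UnitAddCircle :=
  fun j => circleAct (colSum A x j) (p j)

/-! Freeness can be tested one coordinate at a time: `x` fixes a point of `T^n` iff every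
`s_j(x)` fixes a point of the circle. Of the four circle maps, the identity and the two
reflections `t ↦ -t + c` have fixed points (`0` and `c/2`), while `s1` is the translation by
`1/2`, which has none. -/

theorem AddCircle.exists_neg_add_eq_self {𝕜 : Type*} [Field 𝕜] [NeZero (2 : 𝕜)] {p : 𝕜}
    (c : AddCircle p) : ∃ t : AddCircle p, -t + c = t := by
  induction c using QuotientAddGroup.induction_on with
  | H r =>
    refine ⟨((r / 2 : 𝕜) : AddCircle p), ?_⟩
    rw [← QuotientAddGroup.mk_neg, ← QuotientAddGroup.mk_add]
    congr 1
    field_simp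
    ring

lemma circleAct_s0 (t : UnitAddCircle) : circleAct s0 t = t := by
  simp [circleAct, Sα, Sβ, s0]

lemma circleAct_s1 (t : UnitAddCircle) : circleAct s1 t = t + ((1 / 2 : ℝ) : UnitAddCircle) := by
  simp [circleAct, Sα, Sβ, s1, show (1 + 1 : ZMod 2) = 0 from rfl, ZMod.val_one]

lemma circleAct_s2 (t : UnitAddCircle) : circleAct s2 t = -t := by
  simp [circleAct, Sα, Sβ, s2, ZMod.val_one]

lemma circleAct_s3 (t : UnitAddCircle) : circleAct s3 t = -t + ((1 / 2 : ℝ) : UnitAddCircle) := by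
  simp [circleAct, Sα, Sβ, s3, ZMod.val_one]

lemma circleAct_s1_ne_self (t : UnitAddCircle) : circleAct s1 t ≠ t := by
  rw [circleAct_s1, Ne, add_eq_left, AddCircle.coe_eq_zero_iff_of_mem_Ico (by norm_num)]
  norm_num

lemma exists_circleAct_eq_self_iff (s : S4) : (∃ t, circleAct s t = t) ↔ s ≠ s1 := by
  have hs : s = s0 ∨ s = s1 ∨ s = s2 ∨ s = s3 := by revert s; decide
  rcases hs with rfl | rfl | rfl | rfl
  · exact iff_of_true ⟨0, circleAct_s0 0⟩ (by decide)
  · exact iff_of_false (fun ⟨t, ht⟩ => circleAct_s1_ne_self t ht) (not_not.2 rfl)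
  · exact iff_of_true ⟨0, by rw [circleAct_s2, neg_zero]⟩ (by decide)
  · simp_rw [circleAct_s3]
    exact iff_of_true (AddCircle.exists_neg_add_eq_self _) (by decide)

lemma exists_torusAct_eq_self_iff {d n : ℕ} (A : Matrix (Fin d) (Fin n) S4)
    (x : Fin d → ZMod 2) : (∃ p, torusAct A x p = p) ↔ ∀ j, colSum A x j ≠ s1 := by
  simp only [funext_iff, torusAct, ← exists_circleAct_eq_self_iff, Classical.skolem]

/-- the action of `F₂^d` on `T^n` determined by `A` is free iff for every
nonzero `x ∈ F₂^d` there is a column `j` with `s_j(x) = 1`. -/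
theorem freeness_criterion {d n : ℕ} (A : Matrix (Fin d) (Fin n) S4) :
    (∀ x : Fin d → ZMod 2, x ≠ 0 → ∀ p : Fin n → UnitAddCircle, torusAct A x p ≠ p) ↔
    (∀ x : Fin d → ZMod 2, x ≠ 0 → ∃ j : Fin n, colSum A x j = s1) := by
  refine forall_congr' fun x => imp_congr_right fun _ => ?_
  rw [← not_exists, exists_torusAct_eq_self_iff, not_forall_not]
end

section
/- Let d ≥ 2 and let A = [A_0, A_1] ∈ S^{d×(d−1+d(d−1)/2)}. Then w(A) − (1 + σ_1)^{d−1} ∈ J, where σ_1 = x_1 + … + x_d. Equivalently, since w(A) = Π_{1≤i<j≤d}(1 + x_i + x_j), one has Π_{1≤i<j≤d}(1 + x_i + x_j) ≡ (1 + σ_1)^{d−1} mod J. -/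
open MvPolynomial

/-- The linear form `α_j^A = Σ_i α(A_{ij}) x_i`. -/
noncomputable def alphaP {d : ℕ} {ι : Type*} (A : Matrix (Fin d) ι S4) (j : ι) :
    MvPolynomial (Fin d) (ZMod 2) := ∑ i, C (Sα (A i j)) * X i

/-- The linear form `β_j^A = Σ_i β(A_{ij}) x_i`. -/
noncomputable def betaP {d : ℕ} {ι : Type*} (A : Matrix (Fin d) ι S4) (j : ι) :
    MvPolynomial (Fin d) (ZMod 2) := ∑ i, C (Sβ (A i j)) * X i

/-- `θ_j^A = α_j^A · β_j^A`. -/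
noncomputable def thetaP {d : ℕ} {ι : Type*} (A : Matrix (Fin d) ι S4) (j : ι) :
    MvPolynomial (Fin d) (ZMod 2) := alphaP A j * betaP A j

/-- The characteristic ideal `I_A = ⟨θ_1^A, …, θ_n^A⟩`. -/
noncomputable def charIdeal {d : ℕ} {ι : Type*} (A : Matrix (Fin d) ι S4) :
    Ideal (MvPolynomial (Fin d) (ZMod 2)) := Ideal.span (Set.range (thetaP A))

/-- The Stiefel–Whitney polynomial `w(A) = Π_j (1 + α_j^A + β_j^A)`. -/
noncomputable def swPoly {d : ℕ} {ι : Type*} [Fintype ι] (A : Matrix (Fin d) ι S4) :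
    MvPolynomial (Fin d) (ZMod 2) := ∏ j, (1 + alphaP A j + betaP A j)

/-- The ideal `J = ⟨{x_i² + x_j² : i ≠ j} ∪ {x_i x_j : i ≠ j}⟩`. -/
noncomputable def Jideal (d : ℕ) : Ideal (MvPolynomial (Fin d) (ZMod 2)) :=
  Ideal.span ({q | ∃ i j : Fin d, i ≠ j ∧ q = X i ^ 2 + X j ^ 2} ∪
              {q | ∃ i j : Fin d, i ≠ j ∧ q = X i * X j})

/-- `A₀ ∈ S^{d×(d-1)}`: the `l`-th column has entry `1` in rows `l` and `d`, `0` elsewhere. -/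
def matA0 (d : ℕ) : Matrix (Fin d) (Fin (d - 1)) S4 :=
  fun i l => if i.val = l.val ∨ i.val = d - 1 then s1 else s0

/-- Index set for the columns of `A₁`: pairs `1 ≤ i < j ≤ d`. -/
abbrev PairIdx (d : ℕ) : Type := {p : Fin d × Fin d // p.1 < p.2}

/-- `A₁ ∈ S^{d×(d(d-1)/2)}`: the column indexed by `i < j` has entry `2` in row `i`,
entry `3` in row `j` and `0` elsewhere. -/
def matA1 (d : ℕ) : Matrix (Fin d) (PairIdx d) S4 :=
  fun i p => if i = p.1.1 then s2 else if i = p.1.2 then s3 else s0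

/-- `A = [A₀, A₁]`. -/
def matA (d : ℕ) : Matrix (Fin d) (Fin (d - 1) ⊕ PairIdx d) S4 :=
  Matrix.fromCols (matA0 d) (matA1 d)

/-- `B ∈ S^{d×1}`: all entries `2`. -/
def matB (d : ℕ) : Matrix (Fin d) (Fin 1) S4 := fun _ _ => s2

/-- `C ∈ S^{d×1}`: entry `2` in row `1`, `0` elsewhere. -/
def matC (d : ℕ) : Matrix (Fin d) (Fin 1) S4 := fun i _ => if i.val = 0 then s2 else s0

/-- `E = [A,B,C,C]` (the case `d ≡ 0 mod 2`). -/
def matE0 (d : ℕ) := Matrix.fromCols (matA d)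
  (Matrix.fromCols (matB d) (Matrix.fromCols (matC d) (matC d)))

/-- `E = [A,B,B]` (the case `d ≡ 1 mod 4`). -/
def matE1 (d : ℕ) := Matrix.fromCols (matA d) (Matrix.fromCols (matB d) (matB d))

/-- `F = [E,C,C,C,C] = [A,C,C,C,C]` (the case `d ≡ 3 mod 4`; there `E = A`). -/
def matF3 (d : ℕ) := Matrix.fromCols (matA d)
  (Matrix.fromCols (matC d)
    (Matrix.fromCols (matC d) (Matrix.fromCols (matC d) (matC d))))

/-!
Modulo `J` every product `x_i x_j` with `i ≠ j` vanishes, so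
`1 + x_i + x_j ≡ (1 + x_i)(1 + x_j)` and `∏ᵢ (1 + x_i) ≡ 1 + σ₁`. Each index lies in
exactly `d - 1` pairs, so `∏_{i<j} (1 + x_i + x_j) ≡ (∏ᵢ (1 + x_i))^(d-1) ≡ (1 + σ₁)^(d-1)`.
The columns of `A₀` have `α = β`, so in characteristic 2 they contribute factors `1`.
-/

theorem prod_one_add_of_mul_eq_zero {ι R : Type*} [CommRing R] {y : ι → R}
    (hy : ∀ i j, i ≠ j → y i * y j = 0) (s : Finset ι) :
    ∏ i ∈ s, (1 + y i) = 1 + ∑ i ∈ s, y i := by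
  classical
  induction s using Finset.induction_on with
  | empty => simp
  | insert a s ha ih =>
    have hcross : y a * ∑ i ∈ s, y i = 0 :=
      Finset.mul_sum s y (y a) ▸
        Finset.sum_eq_zero fun i hi => hy a i (ne_of_mem_of_not_mem hi ha).symm
    rw [Finset.prod_insert ha, Finset.sum_insert ha, ih]
    linear_combination hcross

section PairProducts

variable {ι M R : Type*} [Fintype ι] [LinearOrder ι]

theorem prod_pairs_lt_mul_eq_prod_pow [CommMonoid M] (a : ι → M) :
    ∏ p : {p : ι × ι // p.1 < p.2}, (a p.1.1 * a p.1.2) = ∏ i, a i ^ (Fintype.card ι - 1) := by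
  classical
  have hsub : ∀ f : ι × ι → M, ∏ p : {p : ι × ι // p.1 < p.2}, f p.1
      = ∏ p : ι × ι, if p.1 < p.2 then f p else 1 := fun f => by
    rw [← Finset.prod_filter]; exact (Finset.prod_subtype _ (by simp) _).symm
  have hswap : ∏ p : ι × ι, (if p.1 < p.2 then a p.2 else 1)
      = ∏ p : ι × ι, if p.2 < p.1 then a p.1 else 1 :=
    Fintype.prod_equiv (Equiv.prodComm ι ι) _ _ (fun _ => rfl)
  have hrow : ∀ i, ∏ j, (if i ≠ j then a i else 1) = a i ^ (Fintype.card ι - 1) := fun i => by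
    rw [Finset.prod_ite, Finset.prod_const_one, mul_one, Finset.prod_const, Finset.filter_ne,
      Finset.card_erase_of_mem (Finset.mem_univ i), Finset.card_univ]
  calc ∏ p : {p : ι × ι // p.1 < p.2}, (a p.1.1 * a p.1.2)
      = (∏ p : ι × ι, if p.1 < p.2 then a p.1 else 1) *
          ∏ p : ι × ι, if p.2 < p.1 then a p.1 else 1 := by
        rw [Finset.prod_mul_distrib, hsub (fun p => a p.1), hsub (fun p => a p.2), hswap]
    _ = ∏ p : ι × ι, if p.1 ≠ p.2 then a p.1 else 1 := by
        rw [← Finset.prod_mul_distrib]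
        refine Finset.prod_congr rfl fun p _ => ?_
        rcases lt_trichotomy p.1 p.2 with h | h | h
        · simp [h, h.ne, h.not_gt]
        · simp [h]
        · simp [h, h.ne', h.not_gt]
    _ = ∏ i, a i ^ (Fintype.card ι - 1) := by
        rw [Fintype.prod_prod_type]; exact Finset.prod_congr rfl fun i _ => hrow i

variable [CommRing R] {y : ι → R}

theorem prod_pairs_lt_one_add_add (hy : ∀ i j, i ≠ j → y i * y j = 0) :
    ∏ p : {p : ι × ι // p.1 < p.2}, (1 + y p.1.1 + y p.1.2)
      = (1 + ∑ i, y i) ^ (Fintype.card ι - 1) :=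
  calc ∏ p : {p : ι × ι // p.1 < p.2}, (1 + y p.1.1 + y p.1.2)
      = ∏ p : {p : ι × ι // p.1 < p.2}, ((1 + y p.1.1) * (1 + y p.1.2)) :=
        Finset.prod_congr rfl fun p _ => by linear_combination -hy _ _ p.2.ne
    _ = (∏ i, (1 + y i)) ^ (Fintype.card ι - 1) := by
        rw [prod_pairs_lt_mul_eq_prod_pow (fun i => 1 + y i), Finset.prod_pow]
    _ = (1 + ∑ i, y i) ^ (Fintype.card ι - 1) := by
        rw [prod_one_add_of_mul_eq_zero hy]

end PairProducts

theorem swPoly_matA (d : ℕ) :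
    swPoly (matA d) = ∏ p : PairIdx d, (1 + X p.1.1 + X p.1.2) := by
  have hA0 : ∀ l, alphaP (matA d) (Sum.inl l) = betaP (matA d) (Sum.inl l) := fun l => by
    simp only [alphaP, betaP, matA, Matrix.fromCols_apply_inl, matA0]
    refine Finset.sum_congr rfl fun i _ => ?_
    split_ifs <;> rfl
  have hα : ∀ p : PairIdx d, alphaP (matA d) (Sum.inr p) = X p.1.1 := fun p => by
    simp only [alphaP, matA, Matrix.fromCols_apply_inr, matA1]
    rw [Finset.sum_eq_single p.1.1
      (fun i _ hi => by rw [if_neg hi]; split_ifs <;> simp [Sα, s0, s3]) (by simp)]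
    simp [Sα, s2]
  have hβ : ∀ p : PairIdx d, betaP (matA d) (Sum.inr p) = X p.1.2 := fun p => by
    simp only [betaP, matA, Matrix.fromCols_apply_inr, matA1]
    rw [Finset.sum_eq_single p.1.2
      (fun i _ hi => by rw [if_neg hi]; split_ifs <;> simp [Sβ, s0, s2]) (by simp),
      if_neg p.2.ne', if_pos rfl]
    simp [Sβ, s3]
  simp only [swPoly, Fintype.prod_sum_type, hA0, hα, hβ, add_assoc, CharTwo.add_self_eq_zero,
    add_zero, Finset.prod_const_one, one_mul]

theorem mk_X_mul_mk_X_eq_zero {d : ℕ} {i j : Fin d} (hij : i ≠ j) :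
    Ideal.Quotient.mk (Jideal d) (X i) * Ideal.Quotient.mk (Jideal d) (X j) = 0 := by
  rw [← map_mul, Ideal.Quotient.eq_zero_iff_mem]
  exact Ideal.subset_span (Or.inr ⟨i, j, hij, rfl⟩)

theorem sw_matA_general (d : ℕ) :
    swPoly (matA d) - (1 + ∑ i : Fin d, X i) ^ (d - 1) ∈ Jideal d := by
  rw [swPoly_matA, ← Ideal.Quotient.eq]
  simp only [map_prod, map_pow, map_add, map_one, map_sum]
  rw [prod_pairs_lt_one_add_add fun i j => mk_X_mul_mk_X_eq_zero, Fintype.card_fin]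

/-- for `d ≥ 2`, `w(A) - (1 + σ₁)^(d-1) ∈ J`, where `σ₁ = x₁ + … + x_d`. -/
theorem sw_matA (d : ℕ) (hd : 2 ≤ d) :
    swPoly (matA d) - (1 + ∑ i : Fin d, X i) ^ (d - 1) ∈ Jideal d :=
  sw_matA_general d
end

section
/- Let d ≥ 2 and let A = [A_0, A_1] ∈ S^{d×(d−1+d(d−1)/2)}. Then A is free: for every nonzero x ∈ F_2^d there exists a column index j such that the sum in the group S of the entries A_{ij} over all rows i with x_i = 1 equals 1. -/
open MvPolynomial

/-! If `x` is not constant, it differs from its last coordinate at some row `l < d`, and column `l`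
of `A₀` sums to `(x_l + x_d) • 1 = 1`. Otherwise `x` is the all-ones vector, and the column of `A₁`
indexed by the pair `(1, 2)` sums to `2 + 3 = 1`. -/

lemma ZMod.two_add_eq_one_of_ne {a b : ZMod 2} (h : a ≠ b) : a + b = 1 := by
  revert a b; decide

lemma colSum_eq_sum_smul {d : ℕ} {ι : Type*} (A : Matrix (Fin d) ι S4) (x : Fin d → ZMod 2)
    (j : ι) : colSum A x j = ∑ i, x i • A i j := by
  refine Finset.sum_congr rfl fun i _ => ?_
  rw [← Nat.cast_smul_eq_nsmul (ZMod 2), ZMod.natCast_zmod_val]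

lemma colSum_eq_add_of_support {d : ℕ} {ι : Type*} (A : Matrix (Fin d) ι S4)
    (x : Fin d → ZMod 2) (j : ι) {a b : Fin d} (hab : a ≠ b)
    (hA : ∀ i, i ≠ a → i ≠ b → A i j = 0) :
    colSum A x j = x a • A a j + x b • A b j := by
  rw [colSum_eq_sum_smul]
  exact Fintype.sum_eq_add a b hab fun i hi => by rw [hA i hi.1 hi.2, smul_zero]

lemma colSum_matA_inl {d : ℕ} (x : Fin d → ZMod 2) (l : Fin (d - 1)) :
    colSum (matA d) x (.inl l) =
      (x (l.castLE (Nat.sub_le d 1)) + x ⟨d - 1, by have := l.2; omega⟩) • s1 := by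
  rw [add_smul, colSum_eq_add_of_support _ x _ (a := l.castLE (Nat.sub_le d 1))
    (b := ⟨d - 1, by have := l.2; omega⟩) (Fin.ne_of_val_ne (by simp; omega))]
  · simp [matA, matA0]
  · intro i hl hlast
    simp only [ne_eq, Fin.ext_iff, Fin.val_castLE] at hl hlast
    simp [matA, matA0, hl, hlast, s0]

lemma colSum_matA_inr {d : ℕ} (x : Fin d → ZMod 2) (p : PairIdx d) :
    colSum (matA d) x (.inr p) = x p.1.1 • s2 + x p.1.2 • s3 := by
  rw [colSum_eq_add_of_support _ x _ p.2.ne]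
  · simp [matA, matA1, p.2.ne']
  · intro i h1 h2
    simp [matA, matA1, h1, h2, s0]

/-- for `d ≥ 2`, the matrix `A = [A₀, A₁]` is free: for every nonzero
`x ∈ F₂^d` some column sum over the support of `x` equals `1`. -/
theorem matA_free (d : ℕ) (hd : 2 ≤ d) :
    ∀ x : Fin d → ZMod 2, x ≠ 0 → ∃ j, colSum (matA d) x j = s1 := by
  intro x hx
  set last : Fin d := ⟨d - 1, by omega⟩
  by_cases h : ∃ l : Fin (d - 1), x (l.castLE (Nat.sub_le d 1)) ≠ x last
  · obtain ⟨l, hl⟩ := h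
    exact ⟨.inl l, by rw [colSum_matA_inl, ZMod.two_add_eq_one_of_ne hl, one_smul]⟩
  push Not at h
  have hconst : ∀ i, x i = x last := fun i => by
    rcases (Nat.le_sub_one_iff_lt (by omega)).mpr i.2 |>.lt_or_eq with hi | hi
    · exact h ⟨i, hi⟩
    · exact congrArg x (Fin.ext hi)
  have hlast : x last = 1 :=
    Fin.eq_one_of_ne_zero _ fun h0 => hx (funext fun i => (hconst i).trans h0)
  refine ⟨.inr ⟨(⟨0, by omega⟩, ⟨1, by omega⟩), Fin.mk_lt_mk.mpr one_pos⟩, ?_⟩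
  simp only [colSum_matA_inr, hconst, hlast, one_smul]
  rfl
end

section
/- Let d ≥ 2 and let p ∈ F_2[x_1,…,x_d] be a homogeneous polynomial of degree 2. Then p ∈ J if and only if Σ_{i=1}^d c_i = 0 in F_2, where c_i is the coefficient of x_i² in p. (Equivalently, the degree-2 part of J is the kernel of the linear map φ on homogeneous quadratics determined by φ(x_i²) = 1 and φ(x_i x_j) = 0 for i ≠ j.) -/
/-!
Let `sumCoeffSq p` be the sum of the coefficients of the squares `x_i²` in `p`. For `x`
homogeneous quadratic only the constant term of `r` contributes to the squares in `r * x`, so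
`sumCoeffSq (r * x) = r(0) * sumCoeffSq x`. As `sumCoeffSq` vanishes on the generators of `J`
(because `1 + 1 = 0`), it vanishes on `r * x` for every `x ∈ J`, in particular on `x` itself.
Conversely, modulo `J` a degree-2 monomial `x_i x_j` is `0` for `i ≠ j` and `x_z²` for `i = j`,
so a homogeneous quadratic `p` is congruent to `sumCoeffSq p * x_z²`.
-/

open MvPolynomial

namespace Finsupp

variable {σ : Type*}

lemma exists_eq_single_add_single_of_degree_eq_two {m : σ →₀ ℕ} (hm : m.degree = 2) :
    ∃ i j, m = single i 1 + single j 1 := by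
  obtain ⟨i, hi⟩ : ∃ i, m i ≠ 0 := by
    by_contra! h
    simp [show m = 0 from ext h] at hm
  have hsplit : m - single i 1 + single i 1 = m :=
    tsub_add_cancel_of_le (single_le_iff.mpr (Nat.one_le_iff_ne_zero.mpr hi))
  have hdeg : (m - single i 1).degree = 1 := by
    have := congrArg degree hsplit
    rw [map_add, degree_single] at this
    omega
  obtain ⟨j, hj⟩ : m - single i 1 ∈ Set.range (fun a : σ ↦ single a 1) := by
    rwa [range_single_one]
  exact ⟨i, j, by rw [← hsplit, ← hj, add_comm]⟩

end Finsupp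

namespace MvPolynomial

variable {σ R : Type*} [CommSemiring R]

lemma IsHomogeneous.coeff_mul_of_degree_eq {x : MvPolynomial σ R} {n : ℕ}
    (hx : x.IsHomogeneous n) {m : σ →₀ ℕ} (hm : m.degree = n) (r : MvPolynomial σ R) :
    (r * x).coeff m = r.coeff 0 * x.coeff m := by
  classical
  rw [coeff_mul, Finset.sum_eq_single (0, m)]
  · rintro ⟨a, b⟩ hab hne
    rw [Finset.HasAntidiagonal.mem_antidiagonal] at hab
    dsimp only at hab ⊢
    by_cases hb : x.coeff b = 0
    · rw [hb, mul_zero]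
    have hbdeg : b.degree = n := by rw [Finsupp.degree_eq_weight_one]; exact hx hb
    have ha : a = 0 := by
      rw [← Finsupp.degree_eq_zero_iff]
      have := congrArg Finsupp.degree hab
      rw [map_add] at this
      omega
    subst ha
    simp only [zero_add] at hab
    exact (hne (by rw [hab])).elim
  · simp

variable [Fintype σ]

variable (σ R) in
noncomputable def sumCoeffSq : MvPolynomial σ R →ₗ[R] R :=
  ∑ i, lcoeff R (Finsupp.single i 2)

lemma sumCoeffSq_apply (p : MvPolynomial σ R) :
    sumCoeffSq σ R p = ∑ i, p.coeff (Finsupp.single i 2) := by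
  simp [sumCoeffSq]

lemma sumCoeffSq_X_sq (i : σ) : sumCoeffSq σ R (X i ^ 2) = 1 := by
  classical
  simp [sumCoeffSq_apply, coeff_X_pow, Finsupp.single_left_inj two_ne_zero]

lemma sumCoeffSq_X_mul_X {i j : σ} (hij : i ≠ j) : sumCoeffSq σ R (X i * X j) = 0 := by
  classical
  simp [sumCoeffSq_apply, coeff_mul_X', coeff_X, ← Finsupp.single_tsub,
    Finsupp.single_left_inj one_ne_zero, hij]

lemma IsHomogeneous.sumCoeffSq_mul {x : MvPolynomial σ R} (hx : x.IsHomogeneous 2)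
    (r : MvPolynomial σ R) : sumCoeffSq σ R (r * x) = r.coeff 0 * sumCoeffSq σ R x := by
  simp only [sumCoeffSq_apply, hx.coeff_mul_of_degree_eq (Finsupp.degree_single _ _),
    Finset.mul_sum]

end MvPolynomial

section

variable {d : ℕ}

lemma X_sq_add_X_sq_mem_Jideal (i j : Fin d) : X i ^ 2 + X j ^ 2 ∈ Jideal d := by
  rcases eq_or_ne i j with rfl | hij
  · rw [CharTwo.add_self_eq_zero]
    exact zero_mem _
  · exact Ideal.subset_span (Or.inl ⟨i, j, hij, rfl⟩)

lemma X_mul_X_mem_Jideal {i j : Fin d} (hij : i ≠ j) : X i * X j ∈ Jideal d :=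
  Ideal.subset_span (Or.inr ⟨i, j, hij, rfl⟩)

lemma sumCoeffSq_mul_eq_zero_of_mem_Jideal {x : MvPolynomial (Fin d) (ZMod 2)}
    (hx : x ∈ Jideal d) (r : MvPolynomial (Fin d) (ZMod 2)) :
    sumCoeffSq (Fin d) (ZMod 2) (r * x) = 0 := by
  induction hx using Submodule.span_induction generalizing r with
  | mem g hg =>
    rcases hg with ⟨i, j, -, rfl⟩ | ⟨i, j, hij, rfl⟩
    · have hhom : (X i ^ 2 + X j ^ 2 : MvPolynomial (Fin d) (ZMod 2)).IsHomogeneous 2 :=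
        (isHomogeneous_X_pow i 2).add (isHomogeneous_X_pow j 2)
      rw [hhom.sumCoeffSq_mul, map_add, sumCoeffSq_X_sq, sumCoeffSq_X_sq,
        CharTwo.add_self_eq_zero, mul_zero]
    · have hhom : (X i * X j : MvPolynomial (Fin d) (ZMod 2)).IsHomogeneous 2 :=
        (isHomogeneous_X _ i).mul (isHomogeneous_X _ j)
      rw [hhom.sumCoeffSq_mul, sumCoeffSq_X_mul_X hij, mul_zero]
  | zero => rw [mul_zero, map_zero]
  | add a b _ _ ha hb => rw [mul_add, map_add, ha, hb, add_zero]
  | smul s a _ ha => rw [smul_eq_mul, ← mul_assoc, ha]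

lemma sub_C_sumCoeffSq_mul_X_sq_mem_Jideal {p : MvPolynomial (Fin d) (ZMod 2)}
    (hp : p.IsHomogeneous 2) (z : Fin d) :
    p - C (sumCoeffSq (Fin d) (ZMod 2) p) * X z ^ 2 ∈ Jideal d := by
  let L := LinearMap.id - (sumCoeffSq (Fin d) (ZMod 2)).smulRight (X z ^ 2)
  suffices homogeneousSubmodule (Fin d) (ZMod 2) 2 ≤
      ((Jideal d).restrictScalars (ZMod 2)).comap L by
    simpa [L, smul_eq_C_mul] using this hp
  rw [homogeneousSubmodule_eq_finsupp_supported, AddMonoidAlgebra.supported_eq_span_single,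
    Submodule.span_le]
  rintro _ ⟨m, hm, rfl⟩
  obtain ⟨i, j, rfl⟩ := Finsupp.exists_eq_single_add_single_of_degree_eq_two hm
  have hmonomial : (AddMonoidAlgebra.single (Finsupp.single i 1 + Finsupp.single j 1) 1 :
      MvPolynomial (Fin d) (ZMod 2)) = X i * X j := by
    rw [X, X, monomial_mul, one_mul]; rfl
  simp only [SetLike.mem_coe, Submodule.mem_comap, hmonomial, L, LinearMap.sub_apply,
    LinearMap.id_apply, LinearMap.smulRight_apply, Submodule.restrictScalars_mem]
  rcases eq_or_ne i j with rfl | hij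
  · rw [← sq, sumCoeffSq_X_sq, one_smul, CharTwo.sub_eq_add]
    exact X_sq_add_X_sq_mem_Jideal i z
  · rw [sumCoeffSq_X_mul_X hij, zero_smul, sub_zero]
    exact X_mul_X_mem_Jideal hij

end

/-- a homogeneous quadratic `p` lies in `J` iff the sum of the coefficients
of the `x_i²` in `p` vanishes. -/
theorem quadratic_mem_J_iff (d : ℕ) (hd : 2 ≤ d) (p : MvPolynomial (Fin d) (ZMod 2))
    (hp : p.IsHomogeneous 2) :
    p ∈ Jideal d ↔ ∑ i : Fin d, p.coeff (Finsupp.single i 2) = 0 := by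
  rw [← sumCoeffSq_apply]
  constructor
  · intro hpJ
    simpa using sumCoeffSq_mul_eq_zero_of_mem_Jideal hpJ 1
  · intro hsum
    simpa [hsum] using sub_C_sumCoeffSq_mul_X_sq_mem_Jideal hp ⟨0, by omega⟩
end

section
/- Let d ≥ 2. Then the characteristic ideal of the matrix E equals J, i.e., I_E = J, where E = [A,B,C,C] if d ≡ 0 mod 2, E = [A,B,B] if d ≡ 1 mod 4, and E = A if d ≡ 3 mod 4. -/
open MvPolynomial

/-!
Every column of `B` and `C` has `β = 0`, so it contributes `θ = 0` and `I_E = I_A` in all three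
cases. A column of `A₀` has `α = β = x_l + x_d`, so `θ = x_l² + x_d²` by the Frobenius identity in
characteristic two; a column of `A₁` gives `θ = x_i x_j`. These generate `J`, since
`x_i² + x_j² = (x_i² + x_d²) + (x_j² + x_d²)`.
-/

section CharIdeal

variable {d : ℕ} {ι κ : Type*}

lemma thetaP_fromCols (M : Matrix (Fin d) ι S4) (N : Matrix (Fin d) κ S4) :
    thetaP (Matrix.fromCols M N) = Sum.elim (thetaP M) (thetaP N) := by
  ext1 (j | j) <;> rfl

lemma charIdeal_fromCols (M : Matrix (Fin d) ι S4) (N : Matrix (Fin d) κ S4) :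
    charIdeal (Matrix.fromCols M N) = charIdeal M ⊔ charIdeal N := by
  rw [charIdeal, thetaP_fromCols, Set.Sum.elim_range, Ideal.span_union, charIdeal, charIdeal]

lemma charIdeal_eq_bot_of_Sβ_eq_zero {A : Matrix (Fin d) ι S4} (h : ∀ i j, Sβ (A i j) = 0) :
    charIdeal A = ⊥ := by
  rw [charIdeal, Ideal.span_eq_bot]
  rintro _ ⟨j, rfl⟩
  simp [thetaP, betaP, h]

lemma sum_C_ite_mem_mul_X {R σ : Type*} [CommSemiring R] [Fintype σ] [DecidableEq σ]
    (s : Finset σ) : ∑ i, C (if i ∈ s then (1 : R) else 0) * X i = ∑ i ∈ s, X i := by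
  simp [apply_ite C, ite_mul, Finset.sum_ite_mem]

lemma alphaP_eq_sum {A : Matrix (Fin d) ι S4} {j : ι} (s : Finset (Fin d))
    (h : ∀ i, Sα (A i j) = if i ∈ s then 1 else 0) : alphaP A j = ∑ i ∈ s, X i := by
  simp only [alphaP, h, sum_C_ite_mem_mul_X]

lemma betaP_eq_sum {A : Matrix (Fin d) ι S4} {j : ι} (s : Finset (Fin d))
    (h : ∀ i, Sβ (A i j) = if i ∈ s then 1 else 0) : betaP A j = ∑ i ∈ s, X i := by
  simp only [betaP, h, sum_C_ite_mem_mul_X]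

end CharIdeal

section MatA

variable {d : ℕ}

lemma thetaP_matA_inl {l : Fin (d - 1)} {i k : Fin d} (hi : i.val = l.val) (hk : k.val = d - 1) :
    thetaP (matA d) (Sum.inl l) = X i ^ 2 + X k ^ 2 := by
  have hik : i ≠ k := by rw [Fin.ne_iff_vne]; omega
  have hcol : ∀ r, matA d r (Sum.inl l) = if r ∈ ({i, k} : Finset (Fin d)) then s1 else s0 := by
    intro r
    simp only [matA, Matrix.fromCols_apply_inl, matA0, Finset.mem_insert,
      Finset.mem_singleton, Fin.ext_iff, hi, hk]
  have hα := alphaP_eq_sum (A := matA d) (j := Sum.inl l) {i, k} fun r => by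
    rw [hcol]; split_ifs <;> rfl
  have hβ := betaP_eq_sum (A := matA d) (j := Sum.inl l) {i, k} fun r => by
    rw [hcol]; split_ifs <;> rfl
  rw [thetaP, hα, hβ, Finset.sum_pair hik, ← sq, CharTwo.add_sq]

lemma thetaP_matA_inr (p : PairIdx d) :
    thetaP (matA d) (Sum.inr p) = X p.1.1 * X p.1.2 := by
  have hα := alphaP_eq_sum (A := matA d) (j := Sum.inr p) {p.1.1} fun r => by
    simp only [matA, Matrix.fromCols_apply_inr, matA1, Finset.mem_singleton]
    split_ifs <;> rfl
  have hβ := betaP_eq_sum (A := matA d) (j := Sum.inr p) {p.1.2} fun r => by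
    simp only [matA, Matrix.fromCols_apply_inr, matA1, Finset.mem_singleton]
    split_ifs with h₁ h₂ <;> first | rfl | exact absurd (h₁ ▸ h₂) p.2.ne
  rw [thetaP, hα, hβ, Finset.sum_singleton, Finset.sum_singleton]

lemma charIdeal_matA_le_Jideal : charIdeal (matA d) ≤ Jideal d := by
  rw [charIdeal, Ideal.span_le]
  rintro _ ⟨l | p, rfl⟩
  · have hl := l.isLt
    rw [thetaP_matA_inl (i := ⟨l, by omega⟩) (k := ⟨d - 1, by omega⟩) rfl rfl]
    refine Ideal.subset_span (Or.inl ⟨_, _, ?_, rfl⟩)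
    simp only [ne_eq, Fin.mk.injEq]; omega
  · rw [thetaP_matA_inr]
    exact Ideal.subset_span (Or.inr ⟨_, _, p.2.ne, rfl⟩)

lemma sq_add_sq_mem_charIdeal_matA (i k : Fin d) (hk : k.val = d - 1) :
    X i ^ 2 + X k ^ 2 ∈ charIdeal (matA d) := by
  by_cases hik : i = k
  · rw [hik, CharTwo.add_self_eq_zero]
    exact zero_mem _
  · have hi : i.val < d - 1 := by
      have := Fin.val_ne_of_ne hik
      omega
    rw [← thetaP_matA_inl (l := ⟨i, hi⟩) rfl hk]
    exact Ideal.subset_span ⟨_, rfl⟩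

lemma Jideal_le_charIdeal_matA : Jideal d ≤ charIdeal (matA d) := by
  rw [Jideal, Ideal.span_le]
  rintro _ (⟨i, j, -, rfl⟩ | ⟨i, j, hij, rfl⟩)
  · let k : Fin d := ⟨d - 1, by have := i.isLt; omega⟩
    have hsplit : (X i ^ 2 + X j ^ 2 : MvPolynomial (Fin d) (ZMod 2)) =
        (X i ^ 2 + X k ^ 2) + (X j ^ 2 + X k ^ 2) := by
      linear_combination -CharTwo.add_self_eq_zero (X k ^ 2 : MvPolynomial (Fin d) (ZMod 2))
    rw [hsplit]
    exact add_mem (sq_add_sq_mem_charIdeal_matA i k rfl) (sq_add_sq_mem_charIdeal_matA j k rfl)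
  · rcases hij.lt_or_gt with h | h
    · exact Ideal.subset_span ⟨Sum.inr ⟨(i, j), h⟩, thetaP_matA_inr _⟩
    · rw [mul_comm]
      exact Ideal.subset_span ⟨Sum.inr ⟨(j, i), h⟩, thetaP_matA_inr _⟩

lemma charIdeal_matA : charIdeal (matA d) = Jideal d :=
  le_antisymm charIdeal_matA_le_Jideal Jideal_le_charIdeal_matA

end MatA

lemma charIdeal_matB (d : ℕ) : charIdeal (matB d) = ⊥ :=
  charIdeal_eq_bot_of_Sβ_eq_zero fun _ _ => rfl

lemma charIdeal_matC (d : ℕ) : charIdeal (matC d) = ⊥ :=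
  charIdeal_eq_bot_of_Sβ_eq_zero fun i _ => by
    simp only [matC]
    split_ifs <;> rfl

theorem charIdeal_matE_general (d : ℕ) :
    (d % 2 = 0 → charIdeal (matE0 d) = Jideal d) ∧
    (d % 4 = 1 → charIdeal (matE1 d) = Jideal d) ∧
    (d % 4 = 3 → charIdeal (matA d) = Jideal d) := by
  refine ⟨fun _ => ?_, fun _ => ?_, fun _ => charIdeal_matA⟩
  · simp only [matE0, charIdeal_fromCols, charIdeal_matA, charIdeal_matB, charIdeal_matC,
      sup_bot_eq]
  · simp only [matE1, charIdeal_fromCols, charIdeal_matA, charIdeal_matB, sup_bot_eq]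

/-- for `d ≥ 2`, the characteristic ideal of the matrix `E` equals `J`,
where `E = [A,B,C,C]` if `d ≡ 0 mod 2`, `E = [A,B,B]` if `d ≡ 1 mod 4`,
and `E = A` if `d ≡ 3 mod 4`. -/
theorem charIdeal_matE (d : ℕ) (hd : 2 ≤ d) :
    (d % 2 = 0 → charIdeal (matE0 d) = Jideal d) ∧
    (d % 4 = 1 → charIdeal (matE1 d) = Jideal d) ∧
    (d % 4 = 3 → charIdeal (matA d) = Jideal d) :=
  charIdeal_matE_general d
end

section
/- Let d ≥ 2 and 1 ≤ k < d, and let f : F_2[x_1,…,x_d] → F_2[y_1,…,y_k] be an F_2-algebra homomorphism such that f(x_i) is a homogeneous polynomial of degree 1 for every i. Then for every homogeneous polynomial p ∈ F_2[x_1,…,x_d] of degree at least 2, the image f(p) lies in the ideal of F_2[y_1,…,y_k] generated by f(J). In particular f(x_1²) lies in the ideal generated by f(J). -/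
/-!
The images `f xᵢ` are `d > k` linear forms in `k` variables, hence linearly dependent:
some `f x_{i₀}` is a combination of the others. Then `f x_{i₀}² = f x_{i₀} · f x_{i₀}` is a
combination of the products `f x_{i₀} · f xᵢ` with `i ≠ i₀`, which lie in `⟨f(J)⟩`, and every
other square `f xᵢ² = (f xᵢ² + f x_{i₀}²) - f x_{i₀}²` follows. So `⟨f(J)⟩` contains all
products `f xᵢ · f xⱼ`, while every homogeneous polynomial of degree `≥ 2` lies in the ideal
generated by the products `xᵢ xⱼ`.
-/

open MvPolynomial

open scoped Pointwise in
lemma Finsupp.exists_single_add_single_le {σ : Type*} (m : σ →₀ ℕ) (hm : 2 ≤ m.degree) :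
    ∃ i j, single i 1 + single j 1 ≤ m := by
  obtain ⟨g, hgm, hg⟩ := exists_le_degree_eq m 2 hm
  have : g ∈ 2 • (single · 1) '' (Set.univ : Set σ) := by
    rw [nsmul_single_one_image]; simp [hg]
  rw [two_nsmul] at this
  obtain ⟨_, ⟨i, -, rfl⟩, _, ⟨j, -, rfl⟩, rfl⟩ := this
  exact ⟨i, j, hgm⟩

namespace MvPolynomial

variable {σ R : Type*} [CommSemiring R]

theorem IsHomogeneous.mem_span_X_mul_X {p : MvPolynomial σ R} {n : ℕ}
    (hp : p.IsHomogeneous n) (hn : 2 ≤ n) :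
    p ∈ Ideal.span (Set.range fun ij : σ × σ => X ij.1 * X ij.2) := by
  have hrange : (Set.range fun ij : σ × σ => (X ij.1 * X ij.2 : MvPolynomial σ R)) =
      (monomial · 1) '' {g | ∃ i j, g = Finsupp.single i 1 + Finsupp.single j 1} := by
    ext q
    simp [X, monomial_mul, eq_comm]
  rw [hrange, mem_ideal_span_monomial_image]
  intro m hm
  have hdeg : m.degree = n := by
    rw [Finsupp.degree_eq_weight_one]; exact hp (mem_support_iff.mp hm)
  obtain ⟨i, j, hij⟩ := m.exists_single_add_single_le (hdeg ▸ hn)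
  exact ⟨_, ⟨i, j, rfl⟩, hij⟩

theorem IsHomogeneous.eq_zero_of_forall_coeff_single {p : MvPolynomial σ R}
    (hp : p.IsHomogeneous 1) (h : ∀ i, coeff (Finsupp.single i 1) p = 0) : p = 0 := by
  ext m
  by_contra hm
  obtain ⟨i, rfl⟩ : m ∈ Set.range (Finsupp.single · 1) := by
    rw [Finsupp.range_single_one, Set.mem_ofPred_eq, Finsupp.degree_eq_weight_one]
    exact hp hm
  exact hm (h i)

theorem not_linearIndependent_of_isHomogeneous_one {K ι : Type*} [Field K] [Fintype σ]
    [Fintype ι] {v : ι → MvPolynomial σ K} (hv : ∀ i, (v i).IsHomogeneous 1)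
    (hcard : Fintype.card σ < Fintype.card ι) : ¬ LinearIndependent K v := by
  intro hind
  let L : MvPolynomial σ K →ₗ[K] σ → K := LinearMap.pi fun i => lcoeff K (Finsupp.single i 1)
  have hdisj : Disjoint (Submodule.span K (Set.range v)) (LinearMap.ker L) := by
    rw [Submodule.disjoint_def]
    intro p hp hL
    refine IsHomogeneous.eq_zero_of_forall_coeff_single ?_ fun i => congrFun hL i
    refine (Submodule.span_le.2 ?_ hp : p ∈ homogeneousSubmodule σ K 1)
    rintro _ ⟨i, rfl⟩
    exact hv i
  have := (hind.map hdisj).fintype_card_le_finrank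
  rw [Module.finrank_fintype_fun_eq_card] at this
  omega

end MvPolynomial

namespace Ideal

variable {K R ι : Type*} [CommSemiring K] [CommRing R] [Algebra K R] {I : Ideal R} {v : ι → R}

theorem mul_mem_of_mem_span {x : R} {s : Set ι} (hx : x ∈ Submodule.span K (v '' s))
    (y : R) (h : ∀ i ∈ s, y * v i ∈ I) : y * x ∈ I := by
  refine (Submodule.span_le (p := (I.restrictScalars K).comap (LinearMap.mulLeft K y)) |>.2 ?_) hx
  rintro _ ⟨i, hi, rfl⟩
  exact h i hi

theorem mul_mem_of_mem_span_compl (hmul : ∀ i j, i ≠ j → v i * v j ∈ I)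
    (hsq : ∀ i j, i ≠ j → v i ^ 2 + v j ^ 2 ∈ I) {i₀ : ι}
    (hi₀ : v i₀ ∈ Submodule.span K (v '' {i₀}ᶜ)) (i j : ι) : v i * v j ∈ I := by
  have hsq₀ : v i₀ ^ 2 ∈ I :=
    sq (v i₀) ▸ mul_mem_of_mem_span hi₀ _ fun i hi => hmul _ _ (Ne.symm hi)
  have hsq' : ∀ i, v i ^ 2 ∈ I := by
    intro i
    rcases eq_or_ne i i₀ with rfl | hi
    · exact hsq₀
    · simpa using I.sub_mem (hsq i i₀ hi) hsq₀
  rcases eq_or_ne i j with rfl | hij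
  · exact sq (v i) ▸ hsq' i
  · exact hmul i j hij

end Ideal

/-- if `k < d` and `f : F₂[x₁,…,x_d] → F₂[y₁,…,y_k]` is an algebra map
sending each `x_i` to a homogeneous linear polynomial, then the image under `f` of any
homogeneous polynomial of degree at least `2` lies in the ideal generated by `f(J)`;
in particular `f(x₁²)` does. -/
theorem image_of_J (d k : ℕ) (hkd : k < d)
    (f : MvPolynomial (Fin d) (ZMod 2) →ₐ[ZMod 2] MvPolynomial (Fin k) (ZMod 2))
    (hf : ∀ i : Fin d, (f (X i)).IsHomogeneous 1) :
    (∀ m : ℕ, 2 ≤ m → ∀ p : MvPolynomial (Fin d) (ZMod 2), p.IsHomogeneous m →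
      f p ∈ Ideal.span (f '' (Jideal d : Set (MvPolynomial (Fin d) (ZMod 2))))) ∧
    f (X (⟨0, by omega⟩ : Fin d) ^ 2) ∈
      Ideal.span (f '' (Jideal d : Set (MvPolynomial (Fin d) (ZMod 2)))) := by
  change (∀ m, 2 ≤ m → ∀ p, p.IsHomogeneous m → f p ∈ (Jideal d).map f) ∧ _ ∈ (Jideal d).map f
  have hJ : ∀ q ∈ Jideal d, f q ∈ (Jideal d).map f := fun q hq => Ideal.mem_map_of_mem f hq
  obtain ⟨i₀, hi₀⟩ : ∃ i₀, f (X i₀) ∈ Submodule.span (ZMod 2) ((f ∘ X) '' {i₀}ᶜ) := by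
    have := not_linearIndependent_of_isHomogeneous_one hf (by simpa using hkd)
    simpa [linearIndependent_iff_notMem_span, Set.compl_eq_univ_sdiff] using this
  have hprod : ∀ i j, f (X i * X j) ∈ (Jideal d).map f := by
    intro i j
    rw [map_mul]
    refine Ideal.mul_mem_of_mem_span_compl (v := f ∘ X) (fun i j hij => ?_)
      (fun i j hij => ?_) hi₀ i j
    · simpa using hJ _ (Ideal.subset_span (Or.inr ⟨i, j, hij, rfl⟩))
    · simpa using hJ _ (Ideal.subset_span (Or.inl ⟨i, j, hij, rfl⟩))
  have main : ∀ m, 2 ≤ m → ∀ p, p.IsHomogeneous m → f p ∈ (Jideal d).map f := by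
    intro m hm p hp
    refine (Ideal.span_le.2 ?_ (hp.mem_span_X_mul_X hm) : p ∈ ((Jideal d).map f).comap f)
    rintro _ ⟨⟨i, j⟩, rfl⟩
    exact hprod i j
  exact ⟨main, main 2 le_rfl _ (isHomogeneous_X_pow _ 2)⟩
end
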